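/- Let G = (L, R, E) be a bipartite graph with nonnegative, pairwise-distinct edge weights, let p ∈ [0,1], and let L' ⊆ L contain each vertex of L independently with probability p. Consider the greedy-based online algorithm: for each u ∈ L \ L', its candidate edge is the edge incident to u in Greedy(G[L' ∪ {u}]) (if any); the online vertices L \ L' are processed in some order, and a candidate edge (u, r) is added to the output matching M if r is not already matched in M. Then for every rule assigning an arrival order to L \ L' (possibly depending on L'), E[w(M)] ≥ (1 − p) · E[w(Greedy(G[L']))], where expectations are over the random sample L'. -/

import Mathlib

/-!
Fix an edge `e = (x, r)` and call it a candidate for the sample `A` if `x ∉ A` and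
`e ∈ Greedy(G[A ∪ {x}])`. Deleting `x` from a sample containing it gives
`(1 - p) · Pr[e ∈ Greedy(G[A])] = p · Pr[e is a candidate]`. Whatever the arrival order, every
right vertex with a candidate edge is matched by the algorithm through one of its candidate
edges, so the algorithm earns at least the weight of the lightest candidate at each right vertex.
It therefore suffices that `p · Pr[e is a candidate] ≤ Pr[e is the lightest candidate at r]`.
If `e` is a candidate but not the lightest one, let `(b, r)` be the heaviest lighter candidate:
in the sample `A ∪ {b}` the edge `e` is the lightest candidate, the map `A ↦ A ∪ {b}` is
injective, and it multiplies the probability of the sample by `p / (1 - p)`. This rests on two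
exchange properties of greedy: adding a left vertex never lowers the weight matched at a right
vertex, and a lighter edge `(b, r)` that greedy takes in the absence of `x` does not influence
whether greedy takes `(x, r)`.
-/

open Finset

open scoped Classical

/-- Greedy matching with fuel: repeatedly pick the maximum-weight remaining edge and
discard all edges conflicting with it. -/
noncomputable def greedyAux {α : Type*} [DecidableEq α] (w : α → ℝ)
    (conflict : α → α → Prop) : ℕ → Finset α → Finset α
  | 0, _ => ∅
  | n + 1, F =>
    if h : F.Nonempty then
      let e := (F.exists_max_image w h).choose
      insert e (greedyAux w conflict n (F.filter fun f => ¬ conflict e f))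
    else ∅

/-- The greedy matching of an edge set `F`: process edges in decreasing order of weight,
adding an edge whenever it conflicts with no previously added edge. -/
noncomputable def greedy {α : Type*} [DecidableEq α] (w : α → ℝ)
    (conflict : α → α → Prop) (F : Finset α) : Finset α :=
  greedyAux w conflict F.card F

/-- Two edges of a bipartite graph conflict iff they share an endpoint. -/
def bconf {L R : Type*} (e f : L × R) : Prop := e.1 = f.1 ∨ e.2 = f.2

/-- The edge set of the subgraph `G[U ∪ R]` induced by a set `U` of left vertices
(together with the whole right side). -/
def subL {L R : Type*} [DecidableEq L] (E : Finset (L × R)) (U : Finset L) :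
    Finset (L × R) :=
  E.filter fun e => e.1 ∈ U

/-- Expectation of `f` over a random subset of `s` containing each element
independently with probability `p`. -/
noncomputable def expSubsets {ι : Type*} (p : ℝ) (s : Finset ι) (f : Finset ι → ℝ) : ℝ :=
  ∑ A ∈ s.powerset, p ^ A.card * (1 - p) ^ (s.card - A.card) * f A

/-- A set of edges is a matching if no two distinct edges conflict. -/
def isMatching {α : Type*} (conflict : α → α → Prop) (M : Finset α) : Prop :=
  ∀ e ∈ M, ∀ f ∈ M, e ≠ f → ¬ conflict e f

/-- `OPT`: the maximum total weight of a matching contained in the edge set `E`. -/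
noncomputable def optWeight {α : Type*} (w : α → ℝ) (conflict : α → α → Prop)
    (E : Finset α) : ℝ :=
  (E.powerset.filter fun M => isMatching conflict M).sup'
    ⟨∅, Finset.mem_filter.mpr ⟨Finset.empty_mem_powerset _,
        fun e he => absurd he (Finset.notMem_empty e)⟩⟩
    (fun M => ∑ e ∈ M, w e)

/-- One step of the greedy-based online algorithm with sample `L'`: the arriving
vertex `u` gets as candidate the edge incident to `u` in `Greedy(G[L' ∪ {u}])`, and
the candidate edge is added if its right endpoint is not yet matched. -/
noncomputable def stepB {L R : Type*} [DecidableEq L] [DecidableEq R]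
    (E : Finset (L × R)) (w : L × R → ℝ) (L' : Finset L)
    (M : Finset (L × R)) (u : L) : Finset (L × R) :=
  M ∪ (greedy w bconf (subL E (insert u L'))).filter
      (fun e => e.1 = u ∧ ∀ f ∈ M, f.2 ≠ e.2)

/-- The output matching of the greedy-based online algorithm with sample `L'`,
when the online vertices arrive in the order given by `order`. -/
noncomputable def runB {L R : Type*} [DecidableEq L] [DecidableEq R]
    (E : Finset (L × R)) (w : L × R → ℝ) (L' : Finset L) (order : List L) :
    Finset (L × R) :=
  order.foldl (stepB E w L') ∅


section Greedy

variable {α : Type*} {w : α → ℝ} {conflict : α → α → Prop}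

theorem isMatching.mem_iff_eq_of_conflict {M : Finset α} (hM : isMatching conflict M)
    {t e : α} (ht : t ∈ M) (hte : conflict t e) : e ∈ M ↔ e = t :=
  ⟨fun he => by_contra fun hne => hM t ht e he (Ne.symm hne) hte, fun h => h ▸ ht⟩

theorem filter_not_conflict_ssubset [Std.Refl conflict] {F : Finset α} {t : α} (ht : t ∈ F) :
    F.filter (fun f => ¬ conflict t f) ⊂ F :=
  filter_ssubset.2 ⟨t, ht, not_not.2 (refl t)⟩

variable [DecidableEq α]

theorem greedyAux_subset : ∀ (n : ℕ) (F : Finset α), greedyAux w conflict n F ⊆ F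
  | 0, _ => by simp [greedyAux]
  | n + 1, F => by
    rw [greedyAux]
    split_ifs with h
    · exact insert_subset (F.exists_max_image w h).choose_spec.1
        ((greedyAux_subset n _).trans (filter_subset _ _))
    · exact empty_subset F

theorem greedy_subset (F : Finset α) : greedy w conflict F ⊆ F :=
  greedyAux_subset _ F

theorem greedy_empty : greedy w conflict (∅ : Finset α) = ∅ :=
  subset_empty.1 (greedy_subset ∅)

theorem isMatching_greedyAux [Std.Symm conflict] :
    ∀ (n : ℕ) (F : Finset α), isMatching conflict (greedyAux w conflict n F)
  | 0, _ => by simp [greedyAux, isMatching]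
  | n + 1, F => by
    rw [greedyAux]
    split_ifs with h
    · set t := (F.exists_max_image w h).choose
      have hfar : ∀ f ∈ greedyAux w conflict n (F.filter fun f => ¬ conflict t f),
          ¬ conflict t f :=
        fun f hf => (mem_filter.1 (greedyAux_subset n _ hf)).2
      intro e he f hf hef
      rcases mem_insert.1 he with rfl | he <;> rcases mem_insert.1 hf with rfl | hf
      · exact absurd rfl hef
      · exact hfar f hf
      · exact fun hc => hfar e he (symm hc)
      · exact isMatching_greedyAux n _ e he f hf hef
    · simp [isMatching]

theorem isMatching_greedy [Std.Symm conflict] (F : Finset α) :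
    isMatching conflict (greedy w conflict F) :=
  isMatching_greedyAux _ F

theorem greedyAux_congr_fuel [Std.Refl conflict] :
    ∀ {n m : ℕ} {F : Finset α}, F.card ≤ n → F.card ≤ m →
      greedyAux w conflict n F = greedyAux w conflict m F
  | 0, m, F, hn, _ => by
    rw [card_eq_zero.1 (Nat.le_zero.1 hn)]
    cases m <;> simp [greedyAux]
  | n + 1, 0, F, _, hm => by
    rw [card_eq_zero.1 (Nat.le_zero.1 hm)]
    simp [greedyAux]
  | n + 1, m + 1, F, hn, hm => by
    rw [greedyAux, greedyAux]
    split_ifs with h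
    · have := card_lt_card (filter_not_conflict_ssubset (conflict := conflict)
        (F.exists_max_image w h).choose_spec.1)
      dsimp only
      rw [greedyAux_congr_fuel (m := m) (by omega) (by omega)]
    · rfl

theorem greedy_eq_insert_of_max [Std.Refl conflict] {F : Finset α} (hw : Set.InjOn w F)
    {t : α} (ht : t ∈ F) (hmax : ∀ f ∈ F, w f ≤ w t) :
    greedy w conflict F = insert t (greedy w conflict (F.filter fun f => ¬ conflict t f)) := by
  have hF : F.Nonempty := ⟨t, ht⟩
  obtain ⟨ht', hmax'⟩ := (F.exists_max_image w hF).choose_spec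
  have hchoose : (F.exists_max_image w hF).choose = t :=
    hw ht' ht (le_antisymm (hmax _ ht') (hmax' t ht))
  obtain ⟨k, hk⟩ := Nat.exists_eq_add_one.2 (card_pos.2 hF)
  have hcard := card_lt_card (filter_not_conflict_ssubset (conflict := conflict) ht)
  rw [greedy, hk, greedyAux, dif_pos hF]
  dsimp only
  rw [hchoose, greedy, greedyAux_congr_fuel (by omega) le_rfl]

theorem mem_greedy_of_max [Std.Refl conflict] {F : Finset α} (hw : Set.InjOn w F)
    {t : α} (ht : t ∈ F) (hmax : ∀ f ∈ F, w f ≤ w t) : t ∈ greedy w conflict F := by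
  rw [greedy_eq_insert_of_max hw ht hmax]
  exact mem_insert_self _ _

end Greedy

instance {L R : Type*} : Std.Refl (bconf : L × R → L × R → Prop) := ⟨fun _ => Or.inl rfl⟩

instance {L R : Type*} : Std.Symm (bconf : L × R → L × R → Prop) :=
  ⟨fun _ _ h => h.imp Eq.symm Eq.symm⟩

section Bipartite

variable {L R : Type*} [DecidableEq L] [DecidableEq R] {w : L × R → ℝ}

theorem filter_not_bconf (F : Finset (L × R)) (t : L × R) :
    F.filter (fun f => ¬ bconf t f) =
      (F.filter fun f => f.1 ≠ t.1).filter fun f => f.2 ≠ t.2 := by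
  ext f
  simp only [bconf, mem_filter, not_or, ne_comm, and_assoc]

/- Joint induction: once greedy has taken its heaviest edge `t`, deleting the left endpoint of `t`
leaves the residual instance with the right endpoint of `t` deleted, and vice versa. -/
theorem greedy_filter_dominance {F : Finset (L × R)} (hw : Set.InjOn w F) :
    (∀ v, ∀ e ∈ greedy w bconf (F.filter fun f => f.1 ≠ v),
        ∃ f ∈ greedy w bconf F, f.2 = e.2 ∧ w e ≤ w f) ∧
    (∀ s, ∀ e ∈ greedy w bconf F, e.2 ≠ s →
        ∃ f ∈ greedy w bconf (F.filter fun f => f.2 ≠ s), f.2 = e.2 ∧ w e ≤ w f) := by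
  induction F using Finset.strongInduction with
  | H F ih =>
  rcases F.eq_empty_or_nonempty with rfl | hF
  · simp [greedy_empty]
  obtain ⟨t, ht, hmax⟩ := F.exists_max_image w hF
  have hsub {G : Finset (L × R)} (hG : G ⊆ F) : Set.InjOn w G := hw.mono hG
  have hunf := greedy_eq_insert_of_max (conflict := bconf) hw ht hmax
  have htF := mem_greedy_of_max (conflict := bconf) hw ht hmax
  have hF₂ := filter_not_conflict_ssubset (conflict := bconf) ht
  have ih₂ := ih _ hF₂ (hsub hF₂.subset)
  constructor
  · intro v e he
    have heF : e ∈ F := filter_subset _ _ (greedy_subset _ he)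
    by_cases htv : t.1 = v
    · subst htv
      by_cases hs : e.2 = t.2
      · exact ⟨t, htF, hs.symm, hmax e heF⟩
      obtain ⟨f, hf, hfe⟩ := (ih _ (filter_ssubset.2 ⟨t, ht, by simp⟩)
        (hsub (filter_subset _ _))).2 t.2 e he hs
      rw [← filter_not_bconf] at hf
      exact ⟨f, hunf ▸ mem_insert_of_mem hf, hfe⟩
    · have ht' : t ∈ F.filter fun f => f.1 ≠ v := mem_filter.2 ⟨ht, htv⟩
      rw [greedy_eq_insert_of_max (hsub (filter_subset _ _)) ht'
        (fun f hf => hmax f (filter_subset _ _ hf)), filter_comm] at he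
      rcases mem_insert.1 he with rfl | he
      · exact ⟨e, htF, rfl, le_rfl⟩
      · obtain ⟨f, hf, hfe⟩ := ih₂.1 v e he
        exact ⟨f, hunf ▸ mem_insert_of_mem hf, hfe⟩
  · intro s e he hes
    rw [hunf] at he
    by_cases hts : t.2 = s
    · subst hts
      have he₂ := (mem_insert.1 he).resolve_left (by rintro rfl; exact hes rfl)
      rw [filter_not_bconf, filter_comm] at he₂
      exact (ih _ (filter_ssubset.2 ⟨t, ht, by simp⟩) (hsub (filter_subset _ _))).1 t.1 e he₂
    · have ht' : t ∈ F.filter fun f => f.2 ≠ s := mem_filter.2 ⟨ht, hts⟩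
      rw [greedy_eq_insert_of_max (hsub (filter_subset _ _)) ht'
        (fun f hf => hmax f (filter_subset _ _ hf)), filter_comm]
      rcases mem_insert.1 he with rfl | he
      · exact ⟨e, mem_insert_self _ _, rfl, le_rfl⟩
      · obtain ⟨f, hf, hfe⟩ := ih₂.2 s e he hes
        exact ⟨f, mem_insert_of_mem hf, hfe⟩

theorem weight_lt_of_mem_greedy_filter {F : Finset (L × R)} (hw : Set.InjOn w F)
    {y b : L} {r : R} (hy : (y, r) ∈ greedy w bconf F)
    (hb : (b, r) ∈ greedy w bconf (F.filter fun f => f.1 ≠ y)) : w (b, r) < w (y, r) := by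
  obtain ⟨f, hf, hfr, hle⟩ := (greedy_filter_dominance hw).1 y _ hb
  have hbF := mem_filter.1 (greedy_subset _ hb)
  rw [((isMatching_greedy F).mem_iff_eq_of_conflict hy (Or.inr hfr.symm)).1 hf] at hle
  refine hle.lt_of_ne fun h => hbF.2 ?_
  exact congrArg Prod.fst (hw hbF.1 (greedy_subset _ hy) h)

theorem mem_greedy_iff_mem_greedy_filter {F : Finset (L × R)} (hw : Set.InjOn w F)
    {u b : L} {r : R} (hub : u ≠ b) (hu : (u, r) ∈ F)
    (hb : (b, r) ∈ greedy w bconf (F.filter fun f => f.1 ≠ u))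
    (hwub : w (b, r) < w (u, r)) :
    (u, r) ∈ greedy w bconf F ↔ (u, r) ∈ greedy w bconf (F.filter fun f => f.1 ≠ b) := by
  induction F using Finset.strongInduction with
  | H F ih =>
  obtain ⟨t, ht, hmax⟩ := F.exists_max_image w ⟨_, hu⟩
  have hmaxb (f) (hf : f ∈ F.filter fun f => f.1 ≠ b) : w f ≤ w t :=
    hmax f (filter_subset _ _ hf)
  have hmaxu (f) (hf : f ∈ F.filter fun f => f.1 ≠ u) : w f ≤ w t :=
    hmax f (filter_subset _ _ hf)
  have hwb : Set.InjOn w (F.filter fun f => f.1 ≠ b : Finset _) := hw.mono (filter_subset _ _)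
  have hwu : Set.InjOn w (F.filter fun f => f.1 ≠ u : Finset _) := hw.mono (filter_subset _ _)
  by_cases htu : t.1 = u
  · have htb : t ∈ F.filter fun f => f.1 ≠ b := mem_filter.2 ⟨ht, htu ▸ hub⟩
    rw [(isMatching_greedy _).mem_iff_eq_of_conflict (mem_greedy_of_max hw ht hmax) (Or.inl htu),
      (isMatching_greedy _).mem_iff_eq_of_conflict (mem_greedy_of_max hwb htb hmaxb) (Or.inl htu)]
  have htu' : t ∈ F.filter fun f => f.1 ≠ u := mem_filter.2 ⟨ht, htu⟩
  have hbt : (b, r) ≠ t := by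
    rintro rfl
    exact (hmax _ hu).not_gt hwub
  have hnc : ¬ bconf t (b, r) :=
    isMatching_greedy _ t (mem_greedy_of_max hwu htu' hmaxu) _ hb hbt.symm
  have htb : t ∈ F.filter fun f => f.1 ≠ b := mem_filter.2 ⟨ht, fun h => hnc (Or.inl h)⟩
  have hut : (u, r) ≠ t := fun h => htu (h ▸ rfl)
  rw [greedy_eq_insert_of_max hwu htu' hmaxu, filter_comm, mem_insert] at hb
  rw [greedy_eq_insert_of_max hw ht hmax, greedy_eq_insert_of_max hwb htb hmaxb, filter_comm,
    mem_insert, mem_insert, or_iff_right hut, or_iff_right hut]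
  exact ih _ (filter_not_conflict_ssubset ht) (hw.mono (filter_subset _ _))
    (mem_filter.2 ⟨hu, fun h => h.elim htu fun h => hnc (Or.inr h)⟩) (hb.resolve_left hbt)

end Bipartite

section Candidates

variable {L R : Type*} [DecidableEq L] {E : Finset (L × R)} {w : L × R → ℝ}

theorem subL_subset (U : Finset L) : subL E U ⊆ E := filter_subset _ _

theorem filter_subL_insert {U : Finset L} {v : L} (hv : v ∉ U) :
    (subL E (insert v U)).filter (fun e => e.1 ≠ v) = subL E U := by
  ext e
  simp only [subL, mem_filter, mem_insert]
  constructor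
  · rintro ⟨⟨he, rfl | hU⟩, hne⟩
    exacts [absurd rfl hne, ⟨he, hU⟩]
  · rintro ⟨he, hU⟩
    exact ⟨⟨he, Or.inr hU⟩, fun h => hv (h ▸ hU)⟩

variable [DecidableEq R]

noncomputable def candidates (E : Finset (L × R)) (w : L × R → ℝ) (A : Finset L) :
    Finset (L × R) :=
  E.filter fun e => e.1 ∉ A ∧ e ∈ greedy w bconf (subL E (insert e.1 A))

noncomputable def lightestCandidates (E : Finset (L × R)) (w : L × R → ℝ) (A : Finset L) :
    Finset (L × R) :=
  (candidates E w A).filter fun e => ∀ f ∈ candidates E w A, f.2 = e.2 → w e ≤ w f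

theorem mem_candidates {A : Finset L} {e : L × R} :
    e ∈ candidates E w A ↔ e.1 ∉ A ∧ e ∈ greedy w bconf (subL E (insert e.1 A)) :=
  ⟨fun h => (mem_filter.1 h).2,
    fun h => mem_filter.2 ⟨subL_subset _ (greedy_subset _ h.2), h⟩⟩

theorem weight_lt_of_mem_candidates_insert (hw : Set.InjOn w E) {A : Finset L} {b y : L}
    {r : R} (hb : (b, r) ∈ candidates E w A) (hy : (y, r) ∈ candidates E w (insert b A)) :
    w (b, r) < w (y, r) := by
  obtain ⟨hyA, hyg⟩ := mem_candidates.1 hy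
  refine weight_lt_of_mem_greedy_filter (hw.mono (subL_subset _)) hyg ?_
  rw [filter_subL_insert hyA]
  exact (mem_candidates.1 hb).2

theorem mem_candidates_insert_iff (hw : Set.InjOn w E) {A : Finset L} {b x : L} {r : R}
    (hb : (b, r) ∈ candidates E w A) (hx : x ∉ insert b A) (hxE : (x, r) ∈ E)
    (hwbx : w (b, r) < w (x, r)) :
    (x, r) ∈ candidates E w (insert b A) ↔ (x, r) ∈ candidates E w A := by
  obtain ⟨hbA, hbg⟩ := mem_candidates.1 hb
  have hxb : x ≠ b := fun h => hx (h ▸ mem_insert_self _ _)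
  have hxA : x ∉ A := fun h => hx (mem_insert_of_mem h)
  have hb_ins : b ∉ insert x A := by
    rw [mem_insert]
    exact not_or.2 ⟨hxb.symm, hbA⟩
  have key := mem_greedy_iff_mem_greedy_filter (hw.mono (subL_subset (insert x (insert b A))))
    hxb (mem_filter.2 ⟨hxE, mem_insert_self _ _⟩) (by rwa [filter_subL_insert hx]) hwbx
  rw [insert_comm x b A, filter_subL_insert hb_ins, insert_comm b x A] at key
  simp only [mem_candidates, key, hx, hxA, not_false_eq_true, true_and]

theorem exists_mem_lightestCandidates_insert (hw : Set.InjOn w E) {A : Finset L}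
    {e : L × R} (he : e ∈ candidates E w A) (hne : e ∉ lightestCandidates E w A) :
    ∃ b, (b, e.2) ∈ candidates E w A ∧ e ∈ lightestCandidates E w (insert b A) := by
  obtain ⟨x, r⟩ := e
  -- `b` is the heaviest candidate at `r` lighter than `x`.
  have hlighter : ((candidates E w A).filter fun f => f.2 = r ∧ w f < w (x, r)).Nonempty := by
    simp only [lightestCandidates, mem_filter, he, true_and, not_forall, not_le] at hne
    obtain ⟨f, hf, hfr, hlt⟩ := hne
    exact ⟨f, mem_filter.2 ⟨hf, hfr, hlt⟩⟩
  obtain ⟨⟨b, r'⟩, hbmem, hbmax⟩ := exists_max_image _ w hlighter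
  obtain ⟨hb, rfl, hbx⟩ := mem_filter.1 hbmem
  have hxE := mem_filter.1 he |>.1
  have hx : x ∉ insert b A := by
    rw [mem_insert]
    exact not_or.2 ⟨by rintro rfl; exact lt_irrefl _ hbx, (mem_candidates.1 he).1⟩
  refine ⟨b, hb, mem_filter.2 ⟨(mem_candidates_insert_iff hw hb hx hxE hbx).2 he, ?_⟩⟩
  rintro ⟨y, _⟩ hy rfl
  have hby := weight_lt_of_mem_candidates_insert hw hb hy
  have hyA := (mem_candidates_insert_iff hw hb (mem_candidates.1 hy).1
    (mem_filter.1 hy).1 hby).1 hy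
  by_contra hyx
  exact (hbmax _ (mem_filter.2 ⟨hyA, rfl, not_le.1 hyx⟩)).not_gt hby

theorem eq_of_insert_eq_of_mem_candidates {A₁ A₂ : Finset L} {b₁ b₂ : L} {r : R}
    (h₁ : (b₁, r) ∈ candidates E w A₁) (h₂ : (b₂, r) ∈ candidates E w A₂)
    (h : insert b₁ A₁ = insert b₂ A₂) : A₁ = A₂ := by
  obtain ⟨hb₁A, hb₁g⟩ : b₁ ∉ A₁ ∧ (b₁, r) ∈ greedy w bconf (subL E (insert b₁ A₁)) :=
    mem_candidates.1 h₁
  obtain ⟨hb₂A, hb₂g⟩ : b₂ ∉ A₂ ∧ (b₂, r) ∈ greedy w bconf (subL E (insert b₁ A₁)) :=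
    h ▸ mem_candidates.1 h₂
  have hb : b₁ = b₂ := congrArg Prod.fst (((isMatching_greedy _).mem_iff_eq_of_conflict
    (e := (b₂, r)) hb₁g (Or.inr rfl)).1 hb₂g).symm
  subst hb
  rw [← erase_insert hb₁A, h, erase_insert hb₂A]

end Candidates

section Sampling

variable {ι : Type*} (p : ℝ) (s : Finset ι)

def sampleWeight (A : Finset ι) : ℝ := p ^ A.card * (1 - p) ^ (s.card - A.card)

def sampleProb (P : Finset ι → Prop) [DecidablePred P] : ℝ :=
  ∑ A ∈ s.powerset with P A, sampleWeight p s A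

variable {p s}

theorem sampleWeight_nonneg (hp : p ∈ Set.Icc (0 : ℝ) 1) (A : Finset ι) :
    0 ≤ sampleWeight p s A :=
  mul_nonneg (pow_nonneg hp.1 _) (pow_nonneg (sub_nonneg.2 hp.2) _)

theorem expSubsets_mono (hp : p ∈ Set.Icc (0 : ℝ) 1) {f g : Finset ι → ℝ}
    (h : ∀ A ⊆ s, f A ≤ g A) : expSubsets p s f ≤ expSubsets p s g :=
  sum_le_sum fun A hA => mul_le_mul_of_nonneg_left (h A (mem_powerset.1 hA))
    (sampleWeight_nonneg hp A)

theorem expSubsets_sum_weight {α : Type*} [DecidableEq α] {E : Finset α} (w : α → ℝ)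
    {M : Finset ι → Finset α}
    (hM : ∀ A, M A ⊆ E) :
    expSubsets p s (fun A => ∑ e ∈ M A, w e) =
      ∑ e ∈ E, w e * sampleProb p s (fun A => e ∈ M A) := by
  unfold expSubsets sampleProb
  simp only [sum_filter, mul_sum]
  rw [sum_comm]
  refine sum_congr rfl fun A _ => ?_
  rw [← sum_subset (hM A) fun e _ he => by rw [if_neg he, mul_zero]]
  exact sum_congr rfl fun e he => by rw [if_pos he, sampleWeight, mul_comm]

theorem sampleProb_eq_add {P Q : Finset ι → Prop} [DecidablePred P] [DecidablePred Q]
    (hQP : ∀ A, Q A → P A) :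
    sampleProb p s P = sampleProb p s Q + sampleProb p s (fun A => P A ∧ ¬ Q A) := by
  rw [sampleProb, ← sum_filter_add_sum_filter_not _ Q, filter_filter, filter_filter]
  congr 2
  exact filter_congr fun A _ => ⟨And.right, fun h => ⟨hQP A h, h⟩⟩

variable [DecidableEq ι]

theorem sampleWeight_insert {A : Finset ι} {x : ι} (hA : A ⊆ s) (hx : x ∈ s \ A) :
    (1 - p) * sampleWeight p s (insert x A) = p * sampleWeight p s A := by
  obtain ⟨hxs, hxA⟩ := mem_sdiff.1 hx
  have hlt : A.card < s.card := card_lt_card ⟨hA, fun h => hxA (h hxs)⟩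
  obtain ⟨k, hk⟩ : ∃ k, s.card - A.card = k + 1 := ⟨s.card - A.card - 1, by omega⟩
  rw [sampleWeight, sampleWeight, card_insert_of_notMem hxA, hk,
    show s.card - (A.card + 1) = k by omega]
  ring

theorem mul_sampleProb_eq {P : Finset ι → Prop} [DecidablePred P] {x : ι} (hx : x ∈ s)
    (hP : ∀ A, P A → x ∈ A) :
    (1 - p) * sampleProb p s P = p * sampleProb p s (fun A => x ∉ A ∧ P (insert x A)) := by
  rw [sampleProb, sampleProb, mul_sum, mul_sum]
  refine sum_nbij' (fun B => B.erase x) (fun A => insert x A) ?_ ?_ ?_ ?_ ?_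
  · intro B hB
    obtain ⟨hBs, hPB⟩ := mem_filter.1 hB
    rw [mem_filter, insert_erase (hP B hPB)]
    exact ⟨mem_powerset.2 ((erase_subset x B).trans (mem_powerset.1 hBs)), notMem_erase x B,
      hPB⟩
  · intro A hA
    obtain ⟨hAs, _, hPA⟩ := mem_filter.1 hA
    exact mem_filter.2 ⟨mem_powerset.2 (insert_subset hx (mem_powerset.1 hAs)), hPA⟩
  · intro B hB
    exact insert_erase (hP B (mem_filter.1 hB).2)
  · intro A hA
    exact erase_insert (mem_filter.1 hA).2.1
  · intro B hB
    obtain ⟨hBs, hPB⟩ := mem_filter.1 hB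
    have hxB := hP B hPB
    rw [← sampleWeight_insert ((erase_subset x B).trans (mem_powerset.1 hBs))
      (mem_sdiff.2 ⟨hx, notMem_erase x B⟩), insert_erase hxB]

theorem mul_sampleProb_le (hp : p ∈ Set.Icc (0 : ℝ) 1) {P Q : Finset ι → Prop}
    [DecidablePred P] [DecidablePred Q]
    (g : Finset ι → ι) (hg : ∀ A ⊆ s, P A → g A ∈ s \ A ∧ Q (insert (g A) A))
    (hinj : ∀ A₁ A₂, P A₁ → P A₂ → insert (g A₁) A₁ = insert (g A₂) A₂ → A₁ = A₂) :
    p * sampleProb p s P ≤ (1 - p) * sampleProb p s Q := by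
  have hgA (A) (hA : A ∈ s.powerset.filter P) := hg A (mem_powerset.1 (mem_filter.1 hA).1)
    (mem_filter.1 hA).2
  rw [sampleProb, sampleProb, mul_sum, mul_sum]
  calc ∑ A ∈ s.powerset with P A, p * sampleWeight p s A
      = ∑ A ∈ s.powerset with P A, (1 - p) * sampleWeight p s (insert (g A) A) :=
        sum_congr rfl fun A hA =>
          (sampleWeight_insert (mem_powerset.1 (mem_filter.1 hA).1) (hgA A hA).1).symm
    _ = ∑ B ∈ (s.powerset.filter P).image (fun A => insert (g A) A),
          (1 - p) * sampleWeight p s B :=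
        (sum_image (f := fun B => (1 - p) * sampleWeight p s B) fun A₁ h₁ A₂ h₂ =>
          hinj A₁ A₂ (mem_filter.1 h₁).2 (mem_filter.1 h₂).2).symm
    _ ≤ ∑ B ∈ s.powerset with Q B, (1 - p) * sampleWeight p s B := by
        refine sum_le_sum_of_subset_of_nonneg ?_ fun B _ _ =>
          mul_nonneg (sub_nonneg.2 hp.2) (sampleWeight_nonneg hp B)
        intro B hB
        obtain ⟨A, hA, rfl⟩ := mem_image.1 hB
        obtain ⟨hgs, hQ⟩ := hgA A hA
        exact mem_filter.2 ⟨mem_powerset.2 (insert_subset (mem_sdiff.1 hgs).1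
          (mem_powerset.1 (mem_filter.1 hA).1)), hQ⟩

end Sampling

section Online

variable {L R : Type*} [DecidableEq L] [DecidableEq R] {E : Finset (L × R)} {w : L × R → ℝ}
  {A : Finset L}

theorem subset_foldl_stepB : ∀ (order : List L) (M : Finset (L × R)),
    M ⊆ order.foldl (stepB E w A) M
  | [], _ => subset_rfl
  | u :: order, M => subset_union_left.trans (subset_foldl_stepB order (stepB E w A M u))

theorem foldl_stepB_subset_candidates : ∀ {order : List L} {M : Finset (L × R)},
    (∀ u ∈ order, u ∉ A) → M ⊆ candidates E w A →
      order.foldl (stepB E w A) M ⊆ candidates E w A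
  | [], _, _, hM => hM
  | u :: order, M, horder, hM => by
    refine foldl_stepB_subset_candidates (order := order) (M := stepB E w A M u)
      (fun v hv => horder v (List.mem_cons_of_mem u hv))
      (union_subset hM fun e he => ?_)
    obtain ⟨heg, rfl, -⟩ := mem_filter.1 he
    exact mem_candidates.2 ⟨horder _ List.mem_cons_self, heg⟩

theorem exists_snd_eq_stepB (M : Finset (L × R)) {e : L × R}
    (he : e ∈ greedy w bconf (subL E (insert e.1 A))) :
    ∃ f ∈ stepB E w A M e.1, f.2 = e.2 := by
  by_cases hM : ∃ f ∈ M, f.2 = e.2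
  · obtain ⟨f, hf, hfe⟩ := hM
    exact ⟨f, mem_union_left _ hf, hfe⟩
  · push Not at hM
    exact ⟨e, mem_union_right _ (mem_filter.2 ⟨he, rfl, hM⟩), rfl⟩

theorem exists_snd_eq_foldl_stepB {e : L × R} (he : e ∈ greedy w bconf (subL E (insert e.1 A))) :
    ∀ {order : List L} (M : Finset (L × R)), e.1 ∈ order →
      ∃ f ∈ order.foldl (stepB E w A) M, f.2 = e.2
  | u :: order, M, hmem => by
    rcases List.mem_cons.1 hmem with hu | hmem
    · obtain ⟨f, hf, hfe⟩ := exists_snd_eq_stepB M he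
      exact ⟨f, subset_foldl_stepB order _ (hu ▸ hf), hfe⟩
    · exact exists_snd_eq_foldl_stepB he (order := order) (stepB E w A M u) hmem

theorem sum_lightestCandidates_le_runB (hw0 : ∀ e ∈ E, 0 ≤ w e) (hw : Set.InjOn w E)
    {order : List L} (horder : ∀ u, u ∈ order ↔ u ∉ A) :
    ∑ e ∈ lightestCandidates E w A, w e ≤ ∑ e ∈ runB E w A order, w e := by
  have hM : runB E w A order ⊆ candidates E w A :=
    foldl_stepB_subset_candidates (fun u hu => (horder u).1 hu) (empty_subset _)
  have hw0M (f) (hf : f ∈ runB E w A order) : 0 ≤ w f := hw0 f (mem_filter.1 (hM hf)).1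
  rcases (lightestCandidates E w A).eq_empty_or_nonempty with hempty | ⟨e₀, -⟩
  · rw [hempty, sum_empty]
    exact sum_nonneg hw0M
  have : Nonempty (L × R) := ⟨e₀⟩
  have hcover (e) (he : e ∈ lightestCandidates E w A) :
      ∃ f ∈ runB E w A order, f.2 = e.2 := by
    obtain ⟨heA, heg⟩ := mem_candidates.1 (mem_filter.1 he).1
    exact exists_snd_eq_foldl_stepB heg ∅ ((horder _).2 heA)
  choose! g hgM hg2 using hcover
  have hle (e) (he : e ∈ lightestCandidates E w A) : w e ≤ w (g e) :=
    (mem_filter.1 he).2 _ (hM (hgM e he)) (hg2 e he)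
  have hinj : Set.InjOn g (lightestCandidates E w A) := by
    intro e₁ he₁ e₂ he₂ h
    have h₁₂ : e₁.2 = e₂.2 := by rw [← hg2 e₁ he₁, ← hg2 e₂ he₂, h]
    have hE₁ := (mem_filter.1 (mem_filter.1 he₁).1).1
    have hE₂ := (mem_filter.1 (mem_filter.1 he₂).1).1
    exact hw hE₁ hE₂ (le_antisymm ((mem_filter.1 he₁).2 _ (mem_filter.1 he₂).1 h₁₂.symm)
      ((mem_filter.1 he₂).2 _ (mem_filter.1 he₁).1 h₁₂))
  calc ∑ e ∈ lightestCandidates E w A, w e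
      ≤ ∑ e ∈ lightestCandidates E w A, w (g e) := sum_le_sum hle
    _ = ∑ f ∈ (lightestCandidates E w A).image g, w f := (sum_image hinj).symm
    _ ≤ ∑ f ∈ runB E w A order, w f :=
        sum_le_sum_of_subset_of_nonneg (image_subset_iff.2 hgM) fun f hf _ => hw0M f hf

end Online

section Probabilities

variable {L R : Type*} [Fintype L] [DecidableEq L] [DecidableEq R] {E : Finset (L × R)}
  {w : L × R → ℝ} {p : ℝ}

theorem mul_sampleProb_mem_greedy (e : L × R) :
    (1 - p) * sampleProb p univ (fun A => e ∈ greedy w bconf (subL E A)) =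
      p * sampleProb p univ (fun A => e ∈ candidates E w A) := by
  rw [mul_sampleProb_eq (P := fun A => e ∈ greedy w bconf (subL E A)) (mem_univ e.1)
    fun A he => (mem_filter.1 (greedy_subset _ he)).2]
  simp only [mem_candidates]

theorem mul_sampleProb_candidates_le (hw : Set.InjOn w E) (hp : p ∈ Set.Icc (0 : ℝ) 1)
    (e : L × R) :
    p * sampleProb p univ (fun A => e ∈ candidates E w A) ≤
      sampleProb p univ (fun A => e ∈ lightestCandidates E w A) := by
  have : Nonempty L := ⟨e.1⟩
  choose! b hb hlight using
    fun A (hA : e ∈ candidates E w A ∧ e ∉ lightestCandidates E w A) =>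
      exists_mem_lightestCandidates_insert hw hA.1 hA.2
  have hdisplaced := mul_sampleProb_le hp (Q := fun A => e ∈ lightestCandidates E w A) b
    (fun A _ hA => ⟨mem_sdiff.2 ⟨mem_univ _, (mem_candidates.1 (hb A hA)).1⟩, hlight A hA⟩)
    fun A₁ A₂ h₁ h₂ => eq_of_insert_eq_of_mem_candidates (hb A₁ h₁) (hb A₂ h₂)
  rw [sampleProb_eq_add (Q := fun A => e ∈ lightestCandidates E w A)
    fun A h => (mem_filter.1 h).1, mul_add]
  linarith

end Probabilities

/-- For the greedy-based online algorithm with vertex-sampling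
probability `p`, and for every rule `σ` assigning to each sample `L'` an arrival order of
the remaining vertices `L \ L'`, the expected weight of the output matching is at least
`(1 - p)` times the expected weight of the greedy matching on the sample. -/
theorem stmt2 {L R : Type*} [Fintype L] [DecidableEq L] [DecidableEq R]
    (E : Finset (L × R)) (w : L × R → ℝ)
    (hw0 : ∀ e ∈ E, 0 ≤ w e) (hwinj : Set.InjOn w ↑E)
    (p : ℝ) (hp : p ∈ Set.Icc (0 : ℝ) 1)
    (σ : Finset L → List L)
    (hσ : ∀ A : Finset L, (σ A).Perm (Finset.univ \ A).toList) :
    expSubsets p Finset.univ (fun A => ∑ e ∈ runB E w A (σ A), w e)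
      ≥ (1 - p) *
        expSubsets p Finset.univ (fun A => ∑ e ∈ greedy w bconf (subL E A), w e) := by
  have horder (A : Finset L) (u : L) : u ∈ σ A ↔ u ∉ A := by
    simp [(hσ A).mem_iff]
  calc (1 - p) * expSubsets p univ (fun A => ∑ e ∈ greedy w bconf (subL E A), w e)
      = ∑ e ∈ E, w e * (p * sampleProb p univ (fun A => e ∈ candidates E w A)) := by
        rw [expSubsets_sum_weight w fun A => (greedy_subset _).trans (subL_subset A), mul_sum]
        exact sum_congr rfl fun e _ => by rw [mul_left_comm, mul_sampleProb_mem_greedy]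
    _ ≤ ∑ e ∈ E, w e * sampleProb p univ (fun A => e ∈ lightestCandidates E w A) :=
        sum_le_sum fun e he =>
          mul_le_mul_of_nonneg_left (mul_sampleProb_candidates_le hwinj hp e) (hw0 e he)
    _ = expSubsets p univ (fun A => ∑ e ∈ lightestCandidates E w A, w e) :=
        (expSubsets_sum_weight w fun A => (filter_subset _ _).trans (filter_subset _ _)).symm
    _ ≤ expSubsets p univ (fun A => ∑ e ∈ runB E w A (σ A), w e) :=
        expSubsets_mono hp fun A _ => sum_lightestCandidates_le_runB hw0 hwinj (horder A)
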